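/- arXiv:2311.00684 — 2 statements merged into one kernel-verified Lean document; each statement's English description precedes it below -/
import Mathlib

section
/- For a logit vector l ∈ ℝ^L with a unique maximum entry, the maximum softmax probability max_i softmax_τ(l)_i is a strictly decreasing function of the temperature τ on (0, ∞). -/
open Real Finset

noncomputable def softmax (L : ℕ) (τ : ℝ) (l : Fin L → ℝ) (i : Fin L) : ℝ :=
  Real.exp (l i / τ) / ∑ j, Real.exp (l j / τ)

/-!
Dividing numerator and denominator by `exp (l m / τ)`, the largest probability is
`(∑ j, exp ((l j - l m) / τ))⁻¹`. Every exponent `(l j - l m) / τ` is nonpositive and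
nondecreasing in `τ`, and strictly increasing for `j ≠ m`; such a `j` exists because `L ≥ 2`.
-/

lemma strictMonoOn_div_of_neg {a : ℝ} (ha : a < 0) :
    StrictMonoOn (fun τ : ℝ => a / τ) (Set.Ioi 0) := by
  intro b hb c _ hbc
  simpa only [neg_div, neg_lt_neg_iff] using div_lt_div_of_pos_left (neg_pos.2 ha) hb hbc

lemma monotoneOn_div_of_nonpos {a : ℝ} (ha : a ≤ 0) :
    MonotoneOn (fun τ : ℝ => a / τ) (Set.Ioi 0) := by
  intro b hb c _ hbc
  simpa only [neg_div, neg_le_neg_iff] using div_le_div_of_nonneg_left (neg_nonneg.2 ha) hb hbc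

lemma strictMonoOn_sum_exp_sub_div {ι : Type*} [Fintype ι] {l : ι → ℝ} {m : ι}
    (hm : ∀ j, j ≠ m → l j < l m) (hι : ∃ j, j ≠ m) :
    StrictMonoOn (fun τ => ∑ j, exp ((l j - l m) / τ)) (Set.Ioi 0) := by
  intro τ₁ h₁ τ₂ h₂ h
  obtain ⟨j₀, hj₀⟩ := hι
  refine sum_lt_sum (fun j _ => exp_le_exp.2 ?_) ⟨j₀, mem_univ _, exp_lt_exp.2 ?_⟩
  · have hj : l j - l m ≤ 0 := by
      rcases eq_or_ne j m with rfl | hj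
      · exact (sub_self _).le
      · exact (sub_neg.2 (hm j hj)).le
    exact monotoneOn_div_of_nonpos hj h₁ h₂ h.le
  · exact strictMonoOn_div_of_neg (sub_neg.2 (hm j₀ hj₀)) h₁ h₂ h

lemma softmax_eq_inv_sum_exp_sub (L : ℕ) (τ : ℝ) (l : Fin L → ℝ) (i : Fin L) :
    softmax L τ l i = (∑ j, exp ((l j - l i) / τ))⁻¹ := by
  simp only [softmax, sub_div, exp_sub, ← sum_div, inv_div]

lemma softmax_le_softmax {L : ℕ} {τ : ℝ} (hτ : 0 < τ) (l : Fin L → ℝ) {i j : Fin L}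
    (h : l i ≤ l j) : softmax L τ l i ≤ softmax L τ l j := by
  unfold softmax
  gcongr

lemma sup'_softmax_eq_of_forall_le {L : ℕ} {τ : ℝ} (hτ : 0 < τ) {l : Fin L → ℝ} {m : Fin L}
    (hm : ∀ j, l j ≤ l m) (hne : (univ : Finset (Fin L)).Nonempty) :
    univ.sup' hne (softmax L τ l) = softmax L τ l m :=
  le_antisymm (sup'_le _ _ fun j _ => softmax_le_softmax hτ l (hm j)) (le_sup' _ (mem_univ m))

theorem softmax_max_strictAnti_in_temp (L : ℕ) (hL : 2 ≤ L) (l : Fin L → ℝ)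
    (m : Fin L) (hm : ∀ j, j ≠ m → l j < l m)
    (hne : (Finset.univ : Finset (Fin L)).Nonempty) :
    StrictAntiOn (fun τ => Finset.univ.sup' hne (fun i => softmax L τ l i))
      (Set.Ioi (0 : ℝ)) := by
  have hmax : ∀ j, l j ≤ l m := fun j => by
    rcases eq_or_ne j m with rfl | hj
    exacts [le_rfl, (hm j hj).le]
  have : Nontrivial (Fin L) := Fin.nontrivial_iff_two_le.2 hL
  intro τ₁ h₁ τ₂ h₂ h
  dsimp only
  rw [sup'_softmax_eq_of_forall_le h₁ hmax, sup'_softmax_eq_of_forall_le h₂ hmax,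
    softmax_eq_inv_sum_exp_sub, softmax_eq_inv_sum_exp_sub]
  exact inv_strictAnti₀ (sum_pos (fun _ _ => exp_pos _) hne)
    (strictMonoOn_sum_exp_sub_div hm (exists_ne m) h₁ h₂ h)
end

section
/- Suppose the Shannon entropy at temperature τ is approximated by the map H(L, σ, τ) = log L − σ²/(2τ²). Given L_tr, L_ex with L_ex ≥ L_tr > 0 and σ_tr, σ_ex > 0, the unique positive temperature τ solving H(L_ex, σ_ex, τ) = H(L_tr, σ_tr, 1) is τ = σ_ex / √(σ_tr² + 2·log(L_ex/L_tr)). -/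
open Real

noncomputable def gaussianSoftmaxEntropy (L σ τ : ℝ) : ℝ :=
  log L - σ ^ 2 / (2 * τ ^ 2)

theorem gaussianSoftmaxEntropy_eq_iff {L L' σ σ' τ τ' : ℝ} (hL : L ≠ 0) (hL' : L' ≠ 0) :
    gaussianSoftmaxEntropy L σ τ = gaussianSoftmaxEntropy L' σ' τ' ↔
      σ ^ 2 / τ ^ 2 = σ' ^ 2 / τ' ^ 2 + 2 * log (L / L') := by
  rw [gaussianSoftmaxEntropy, gaussianSoftmaxEntropy, log_div hL hL', mul_comm 2 (τ ^ 2),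
    mul_comm 2 (τ' ^ 2), ← div_div, ← div_div]
  constructor <;> intro h <;> linarith

theorem sq_div_sq_eq_iff_eq_div_sqrt {a τ D : ℝ} (ha : 0 < a) (hτ : 0 < τ) :
    a ^ 2 / τ ^ 2 = D ↔ τ = a / √D := by
  rw [← div_pow]
  constructor
  · rintro rfl
    rw [sqrt_sq (div_pos ha hτ).le, div_div_cancel₀ ha.ne']
  · intro h
    -- `√D = 0` for `D ≤ 0`, and then `a / √D = 0`, which `0 < τ` rules out.
    have hD : 0 < √D := by
      by_contra hD
      rw [le_antisymm (not_lt.mp hD) (sqrt_nonneg D), div_zero] at h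
      exact hτ.ne' h
    rw [h, div_div_cancel₀ ha.ne', sq_sqrt (sqrt_pos.mp hD).le]

theorem entropy_alignment_temperature_general (Ltr Lex σtr σex : ℝ)
    (hLtr : 0 < Ltr) (hLL : Ltr ≤ Lex) (hσex : 0 < σex)
    (hpos : 0 < σtr ^ 2 + 2 * Real.log (Lex / Ltr)) :
    let H : ℝ → ℝ → ℝ → ℝ := fun L σ τ => Real.log L - σ ^ 2 / (2 * τ ^ 2)
    let τ := σex / Real.sqrt (σtr ^ 2 + 2 * Real.log (Lex / Ltr))
    0 < τ ∧ H Lex σex τ = H Ltr σtr 1 ∧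
      ∀ τ' > (0 : ℝ), H Lex σex τ' = H Ltr σtr 1 → τ' = τ := by
  intro H τ
  have hτ : 0 < τ := div_pos hσex (sqrt_pos.mpr hpos)
  have alignment_iff : ∀ τ' > (0 : ℝ),
      gaussianSoftmaxEntropy Lex σex τ' = gaussianSoftmaxEntropy Ltr σtr 1 ↔ τ' = τ :=
    fun τ' hτ' => by
      rw [gaussianSoftmaxEntropy_eq_iff (hLtr.trans_le hLL).ne' hLtr.ne', one_pow, div_one]
      exact sq_div_sq_eq_iff_eq_div_sqrt hσex hτ'
  exact ⟨hτ, (alignment_iff τ hτ).mpr rfl, fun τ' hτ' => (alignment_iff τ' hτ').mp⟩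

theorem entropy_alignment_temperature (Ltr Lex σtr σex : ℝ)
    (hLtr : 0 < Ltr) (hLL : Ltr ≤ Lex) (hσtr : 0 < σtr) (hσex : 0 < σex)
    (hpos : 0 < σtr ^ 2 + 2 * Real.log (Lex / Ltr)) :
    let H : ℝ → ℝ → ℝ → ℝ := fun L σ τ => Real.log L - σ ^ 2 / (2 * τ ^ 2)
    let τ := σex / Real.sqrt (σtr ^ 2 + 2 * Real.log (Lex / Ltr))
    0 < τ ∧ H Lex σex τ = H Ltr σtr 1 ∧
      ∀ τ' > (0 : ℝ), H Lex σex τ' = H Ltr σtr 1 → τ' = τ :=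
  entropy_alignment_temperature_general Ltr Lex σtr σex hLtr hLL hσex hpos
end
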